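/- For every permutation σ in the stabilizer Stab(T₁) of the quartet 12|34 and every 2×2×2×2 tensor P: if sgn(σ)=1 then q₂(σ·P) = q₂(P) and q₃(σ·P) = q₃(P), while if sgn(σ)=−1 then q₂(σ·P) = −q₃(P) and q₃(σ·P) = −q₂(P). -/
import Mathlib


open Matrix

noncomputable def h : Matrix (Fin 2) (Fin 2) ℂ :=
  (Real.sqrt 2 : ℂ)⁻¹ • !![1, 1; -1, 1]

def fst4 (k : Fin 4) : Fin 2 := ⟨k.val / 2, by omega⟩
def snd4 (k : Fin 4) : Fin 2 := ⟨k.val % 2, by omega⟩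

/-- Kronecker product of two `2 × 2` matrices as a `4 × 4` matrix, rows/columns
ordered as `00, 01, 10, 11`. -/
def kron4 (A B : Matrix (Fin 2) (Fin 2) ℂ) : Matrix (Fin 4) (Fin 4) ℂ :=
  Matrix.of fun r c => A (fst4 r) (fst4 c) * B (snd4 r) (snd4 c)

/-- A `2 × 2 × 2 × 2` complex tensor. -/
abbrev Tensor := Fin 2 → Fin 2 → Fin 2 → Fin 2 → ℂ

/-- The `12|34` flattening of a tensor. -/
def Flat1 (P : Tensor) : Matrix (Fin 4) (Fin 4) ℂ :=
  Matrix.of fun r c => P (fst4 r) (snd4 r) (fst4 c) (snd4 c)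

/-- Bottom-right `3 × 3` submatrix of a `4 × 4` matrix. -/
def sub3 (M : Matrix (Fin 4) (Fin 4) ℂ) : Matrix (Fin 3) (Fin 3) ℂ :=
  Matrix.of fun i j => M i.succ j.succ

/-- The binary squangle `q₁`. -/
noncomputable def q1 (P : Tensor) : ℂ :=
  (sub3 (kron4 hᵀ hᵀ * Flat1 P * kron4 h h)).det

def MarkovSet : Set (Matrix (Fin 2) (Fin 2) ℂ) :=
  {M | (∃ a b : ℂ, M = !![1 - a, b; a, 1 - b]) ∧ M.det ≠ 0}
/-- Action of a permutation `σ ∈ S₄` on tensors: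
`(σ·P)_{i₁i₂i₃i₄} = p_{i_{σ(1)} i_{σ(2)} i_{σ(3)} i_{σ(4)}}`. -/
def act (σ : Equiv.Perm (Fin 4)) (P : Tensor) : Tensor :=
  fun i0 i1 i2 i3 =>
    P (![i0, i1, i2, i3] (σ 0)) (![i0, i1, i2, i3] (σ 1))
      (![i0, i1, i2, i3] (σ 2)) (![i0, i1, i2, i3] (σ 3))

/-- The squangle `q₂ := -q₁((23)·P)`. -/
noncomputable def q2 (P : Tensor) : ℂ := -q1 (act (Equiv.swap 1 2) P)

/-- The squangle `q₃ := -q₁((24)·P)`. -/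
noncomputable def q3 (P : Tensor) : ℂ := -q1 (act (Equiv.swap 1 3) P)

/-- The 4-cycle `(1324)` (in 1-indexed notation), i.e. `0 ↦ 2, 2 ↦ 1, 1 ↦ 3, 3 ↦ 0`. -/
def c1324 : Equiv.Perm (Fin 4) := Equiv.swap 0 2 * Equiv.swap 2 1 * Equiv.swap 1 3

/-- The 4-cycle `(1423)` (in 1-indexed notation), i.e. `0 ↦ 3, 3 ↦ 1, 1 ↦ 2, 2 ↦ 0`. -/
def c1423 : Equiv.Perm (Fin 4) := Equiv.swap 0 3 * Equiv.swap 3 1 * Equiv.swap 1 2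

/-- Membership in the stabilizer `Stab(T₁)` of the quartet `12|34`, listed as the
eight explicit permutations `{e,(12),(34),(12)(34),(13)(24),(14)(23),(1324),(1423)}`. -/
def InStab1 (σ : Equiv.Perm (Fin 4)) : Prop :=
  σ = 1 ∨ σ = Equiv.swap 0 1 ∨ σ = Equiv.swap 2 3 ∨
  σ = Equiv.swap 0 1 * Equiv.swap 2 3 ∨ σ = Equiv.swap 0 2 * Equiv.swap 1 3 ∨
  σ = Equiv.swap 0 3 * Equiv.swap 1 2 ∨ σ = c1324 ∨ σ = c1423

section Aux

private lemma fa0 : fst4 0 = 0 := rfl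
private lemma fa1 : fst4 1 = 0 := rfl
private lemma fa2 : fst4 2 = 1 := rfl
private lemma fa3 : fst4 3 = 1 := rfl
private lemma sa0 : snd4 0 = 0 := rfl
private lemma sa1 : snd4 1 = 1 := rfl
private lemma sa2 : snd4 2 = 0 := rfl
private lemma sa3 : snd4 3 = 1 := rfl
private lemma su0 : (0:Fin 3).succ = 1 := rfl
private lemma su1 : (1:Fin 3).succ = 2 := rfl
private lemma su2 : (2:Fin 3).succ = 3 := rfl

private lemma q1_p1 (Q : Tensor) : q1 (fun a b c d => Q b a c d) = -q1 Q := by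
  set N := kron4 hᵀ hᵀ * Flat1 Q * kron4 h h with hN
  have e : ∀ (r r' : Fin 4), r = 1 ∧ r' = 2 ∨ r = 2 ∧ r' = 1 ∨ r = 3 ∧ r' = 3 →
      ∀ c : Fin 4,
      (kron4 hᵀ hᵀ * Flat1 (fun a b c d => Q b a c d) * kron4 h h) r c = N r' c := by
    rintro r r' (⟨rfl, rfl⟩|⟨rfl, rfl⟩|⟨rfl, rfl⟩) c <;> fin_cases c <;>
      simp only [hN, Matrix.mul_apply, Fin.sum_univ_four, kron4, Flat1, Matrix.of_apply,
        Matrix.transpose_apply, fa0, fa1, fa2, fa3, sa0, sa1, sa2, sa3] <;> ring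
  simp only [q1, sub3, Matrix.det_fin_three, Matrix.of_apply, su0, su1, su2, ← hN]
  rw [e 1 2 (by tauto), e 1 2 (by tauto), e 1 2 (by tauto),
      e 2 1 (by tauto), e 2 1 (by tauto), e 2 1 (by tauto),
      e 3 3 (by tauto), e 3 3 (by tauto), e 3 3 (by tauto)]
  ring

private lemma q1_p2 (Q : Tensor) : q1 (fun a b c d => Q a b d c) = -q1 Q := by
  set N := kron4 hᵀ hᵀ * Flat1 Q * kron4 h h with hN
  have e : ∀ (c c' : Fin 4), c = 1 ∧ c' = 2 ∨ c = 2 ∧ c' = 1 ∨ c = 3 ∧ c' = 3 →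
      ∀ r : Fin 4,
      (kron4 hᵀ hᵀ * Flat1 (fun a b c d => Q a b d c) * kron4 h h) r c = N r c' := by
    rintro c c' (⟨rfl, rfl⟩|⟨rfl, rfl⟩|⟨rfl, rfl⟩) r <;> fin_cases r <;>
      simp only [hN, Matrix.mul_apply, Fin.sum_univ_four, kron4, Flat1, Matrix.of_apply,
        Matrix.transpose_apply, fa0, fa1, fa2, fa3, sa0, sa1, sa2, sa3] <;> ring
  simp only [q1, sub3, Matrix.det_fin_three, Matrix.of_apply, su0, su1, su2, ← hN]
  rw [e 1 2 (by tauto), e 1 2 (by tauto), e 1 2 (by tauto),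
      e 2 1 (by tauto), e 2 1 (by tauto), e 2 1 (by tauto),
      e 3 3 (by tauto), e 3 3 (by tauto), e 3 3 (by tauto)]
  ring

private lemma q1_p3 (Q : Tensor) : q1 (fun a b c d => Q c d a b) = q1 Q := by
  set N := kron4 hᵀ hᵀ * Flat1 Q * kron4 h h with hN
  have e : ∀ (r c : Fin 4),
      (kron4 hᵀ hᵀ * Flat1 (fun a b c d => Q c d a b) * kron4 h h) r c = N c r := by
    intro r c
    fin_cases r <;> fin_cases c <;>
      simp only [hN, Matrix.mul_apply, Fin.sum_univ_four, kron4, Flat1, Matrix.of_apply,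
        Matrix.transpose_apply, fa0, fa1, fa2, fa3, sa0, sa1, sa2, sa3] <;> ring
  simp only [q1, sub3, Matrix.det_fin_three, Matrix.of_apply, su0, su1, su2, ← hN]
  rw [e 1 1, e 1 2, e 1 3, e 2 1, e 2 2, e 2 3, e 3 1, e 3 2, e 3 3]
  ring

private lemma q1_p4 (Q : Tensor) : q1 (fun a b c d => Q b a d c) = q1 Q := by
  have h1 := q1_p1 (fun a b c d => Q a b d c)
  rw [q1_p2 Q, neg_neg] at h1
  exact h1

private lemma q1_p5 (Q : Tensor) : q1 (fun a b c d => Q d c b a) = q1 Q := by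
  have h1 := q1_p1 (fun a b c d => Q d c a b)
  have h2 := q1_p2 (fun a b c d => Q c d a b)
  rw [q1_p3 Q] at h2
  rw [h2, neg_neg] at h1
  exact h1

private lemma q1_p6 (Q : Tensor) : q1 (fun a b c d => Q c d b a) = -q1 Q := by
  have h1 := q1_p1 (fun a b c d => Q c d a b)
  rw [q1_p3 Q] at h1
  exact h1

private lemma q1_p7 (Q : Tensor) : q1 (fun a b c d => Q d c a b) = -q1 Q := by
  have h1 := q1_p2 (fun a b c d => Q c d a b)
  rw [q1_p3 Q] at h1
  exact h1

end Aux

/-- The squangles `q₂, q₃` transform under the stabilizer of the quartet `12|34`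
as a signed permutation representation. -/
theorem q2_q3_under_stab (σ : Equiv.Perm (Fin 4)) (hσ : InStab1 σ) (P : Tensor) :
    (Equiv.Perm.sign σ = 1 → q2 (act σ P) = q2 P ∧ q3 (act σ P) = q3 P) ∧
    (Equiv.Perm.sign σ = -1 → q2 (act σ P) = -q3 P ∧ q3 (act σ P) = -q2 P) := by
  obtain rfl | rfl | rfl | rfl | rfl | rfl | rfl | rfl := hσ
  · exact ⟨fun _ => ⟨rfl, rfl⟩, fun hs => absurd hs (by decide)⟩
  · -- (12), odd
    refine ⟨fun hs => absurd hs (by decide), fun _ => ⟨?_, ?_⟩⟩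
    · have key : q1 (act (Equiv.swap 1 2) (act (Equiv.swap 0 1) P))
          = -q1 (act (Equiv.swap 1 3) P) := q1_p6 (act (Equiv.swap 1 3) P)
      simp only [q2, q3]; rw [key]
    · have key : q1 (act (Equiv.swap 1 3) (act (Equiv.swap 0 1) P))
          = -q1 (act (Equiv.swap 1 2) P) := q1_p7 (act (Equiv.swap 1 2) P)
      simp only [q2, q3]; rw [key]
  · -- (34), odd
    refine ⟨fun hs => absurd hs (by decide), fun _ => ⟨?_, ?_⟩⟩
    · have key : q1 (act (Equiv.swap 1 2) (act (Equiv.swap 2 3) P))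
          = -q1 (act (Equiv.swap 1 3) P) := q1_p2 (act (Equiv.swap 1 3) P)
      simp only [q2, q3]; rw [key]
    · have key : q1 (act (Equiv.swap 1 3) (act (Equiv.swap 2 3) P))
          = -q1 (act (Equiv.swap 1 2) P) := q1_p2 (act (Equiv.swap 1 2) P)
      simp only [q2, q3]; rw [key]
  · -- (12)(34), even
    refine ⟨fun _ => ⟨?_, ?_⟩, fun hs => absurd hs (by decide)⟩
    · have key : q1 (act (Equiv.swap 1 2) (act (Equiv.swap 0 1 * Equiv.swap 2 3) P))
          = q1 (act (Equiv.swap 1 2) P) := q1_p3 (act (Equiv.swap 1 2) P)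
      simp only [q2]; rw [key]
    · have key : q1 (act (Equiv.swap 1 3) (act (Equiv.swap 0 1 * Equiv.swap 2 3) P))
          = q1 (act (Equiv.swap 1 3) P) := q1_p5 (act (Equiv.swap 1 3) P)
      simp only [q3]; rw [key]
  · -- (13)(24), even
    refine ⟨fun _ => ⟨?_, ?_⟩, fun hs => absurd hs (by decide)⟩
    · have key : q1 (act (Equiv.swap 1 2) (act (Equiv.swap 0 2 * Equiv.swap 1 3) P))
          = q1 (act (Equiv.swap 1 2) P) := q1_p4 (act (Equiv.swap 1 2) P)
      simp only [q2]; rw [key]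
    · have key : q1 (act (Equiv.swap 1 3) (act (Equiv.swap 0 2 * Equiv.swap 1 3) P))
          = q1 (act (Equiv.swap 1 3) P) := q1_p3 (act (Equiv.swap 1 3) P)
      simp only [q3]; rw [key]
  · -- (14)(23), even
    refine ⟨fun _ => ⟨?_, ?_⟩, fun hs => absurd hs (by decide)⟩
    · have key : q1 (act (Equiv.swap 1 2) (act (Equiv.swap 0 3 * Equiv.swap 1 2) P))
          = q1 (act (Equiv.swap 1 2) P) := q1_p5 (act (Equiv.swap 1 2) P)
      simp only [q2]; rw [key]
    · have key : q1 (act (Equiv.swap 1 3) (act (Equiv.swap 0 3 * Equiv.swap 1 2) P))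
          = q1 (act (Equiv.swap 1 3) P) := q1_p4 (act (Equiv.swap 1 3) P)
      simp only [q3]; rw [key]
  · -- (1324), odd
    refine ⟨fun hs => absurd hs (by decide), fun _ => ⟨?_, ?_⟩⟩
    · have key : q1 (act (Equiv.swap 1 2) (act c1324 P))
          = -q1 (act (Equiv.swap 1 3) P) := q1_p1 (act (Equiv.swap 1 3) P)
      simp only [q2, q3]; rw [key]
    · have key : q1 (act (Equiv.swap 1 3) (act c1324 P))
          = -q1 (act (Equiv.swap 1 2) P) := q1_p6 (act (Equiv.swap 1 2) P)
      simp only [q2, q3]; rw [key]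
  · -- (1423), odd
    refine ⟨fun hs => absurd hs (by decide), fun _ => ⟨?_, ?_⟩⟩
    · have key : q1 (act (Equiv.swap 1 2) (act c1423 P))
          = -q1 (act (Equiv.swap 1 3) P) := q1_p7 (act (Equiv.swap 1 3) P)
      simp only [q2, q3]; rw [key]
    · have key : q1 (act (Equiv.swap 1 3) (act c1423 P))
          = -q1 (act (Equiv.swap 1 2) P) := q1_p1 (act (Equiv.swap 1 2) P)
      simp only [q2, q3]; rw [key]
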